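/- The homogeneous cubic polynomial T₂ = (1/5)a³ + (12/5)a²b + (26/5)ab² + 4b³ + (9/5)a²c − (16/5)abc − 2b²c + ac² + 4bc² + c³ is irreducible in the polynomial ring ℚ[a,b,c]. -/

import Mathlib

open MvPolynomial

noncomputable section

/-- The cubic form `T₂` induced on the degree-3 component of the Milnor ring `M(t₂)`,
with `a = X 0`, `b = X 1`, `c = X 2`. -/
def T2poly : MvPolynomial (Fin 3) ℚ :=
  C (1 / 5) * X 0 ^ 3 + C (12 / 5) * X 0 ^ 2 * X 1 + C (26 / 5) * X 0 * X 1 ^ 2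
    + C 4 * X 1 ^ 3 + C (9 / 5) * X 0 ^ 2 * X 2 - C (16 / 5) * X 0 * X 1 * X 2
    - C 2 * X 1 ^ 2 * X 2 + X 0 * X 2 ^ 2 + C 4 * X 1 * X 2 ^ 2 + X 2 ^ 3

lemma no_rat_root_aux (z : ℚ) : z ^ 3 + 4 * z ^ 2 - 2 * z + 4 ≠ 0 := by
  intro hz
  have hint : IsIntegral ℤ z := by
    refine ⟨Polynomial.X ^ 3 + Polynomial.C 4 * Polynomial.X ^ 2 - Polynomial.C 2 * Polynomial.X
      + Polynomial.C 4, ?_, ?_⟩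
    · monicity!
    · simp only [Polynomial.eval₂_add, Polynomial.eval₂_sub, Polynomial.eval₂_mul,
        Polynomial.eval₂_pow, Polynomial.eval₂_X, Polynomial.eval₂_C]
      simp only [algebraMap_int_eq, eq_intCast]
      push_cast
      linear_combination hz
  obtain ⟨m, rfl⟩ := IsIntegrallyClosed.isIntegral_iff.mp hint
  simp only [algebraMap_int_eq, eq_intCast] at hz
  have hm : m ^ 3 + 4 * m ^ 2 - 2 * m + 4 = 0 := by exact_mod_cast hz
  have h5 : ∀ w : ZMod 5, w ^ 3 + 4 * w ^ 2 - 2 * w + 4 ≠ 0 := by decide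
  have := congrArg (fun t : ℤ => (t : ZMod 5)) hm
  push_cast at this
  exact h5 _ this

/-- The cubic `T₂ = a³/5 + 12a²b/5 + 26ab²/5 + 4b³ + 9a²c/5 - 16abc/5 - 2b²c + ac² + 4bc²
+ c³` is irreducible in `ℚ[a,b,c]`. -/
theorem T2_irreducible : Irreducible T2poly := by
  have s0 : Equiv.swap (0 : Fin 3) 2 0 = 2 := by decide
  have s1 : Equiv.swap (0 : Fin 3) 2 1 = 1 := by decide
  have s2 : Equiv.swap (0 : Fin 3) 2 2 = 0 := by decide
  have hC : ∀ r : ℚ, finSuccEquiv ℚ 2 (C r) = Polynomial.C (C r) := fun r => by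
    simp [finSuccEquiv_apply]
  have e1 : finSuccEquiv ℚ 2 (X 1 : MvPolynomial (Fin 3) ℚ) = Polynomial.C (X 0) := by
    rw [show (1 : Fin 3) = Fin.succ 0 from rfl, finSuccEquiv_X_succ]
  have e2 : finSuccEquiv ℚ 2 (X 2 : MvPolynomial (Fin 3) ℚ) = Polynomial.C (X 1) := by
    rw [show (2 : Fin 3) = Fin.succ 1 from rfl, finSuccEquiv_X_succ]
  set Q := (finSuccEquiv ℚ 2) (rename (Equiv.swap 0 2) T2poly) with hQ
  have key : Q =
      Polynomial.X ^ 3 + Polynomial.C (X 1 + C 4 * X 0) * Polynomial.X ^ 2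
        + Polynomial.C (C (9/5) * X 1 ^ 2 - C (16/5) * X 1 * X 0 - C 2 * X 0 ^ 2) * Polynomial.X
        + Polynomial.C (C (1/5) * X 1 ^ 3 + C (12/5) * X 1 ^ 2 * X 0 + C (26/5) * X 1 * X 0 ^ 2
            + C 4 * X 0 ^ 3) := by
    rw [hQ]
    simp only [T2poly, map_add, map_sub, map_mul, map_pow, rename_X, rename_C, s0, s1, s2,
      hC, e1, e2, finSuccEquiv_X_zero, map_ofNat]
    ring
  have hmonic : Q.Monic := by rw [key]; monicity!
  have hdeg : Q.natDegree = 3 := by rw [key]; compute_degree!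
  have hirr : Irreducible Q := by
    rw [hmonic.irreducible_iff_roots_eq_zero_of_degree_le_three (by omega) (by omega)]
    rw [Multiset.eq_zero_iff_forall_notMem]
    intro y hy
    rw [Polynomial.mem_roots hmonic.ne_zero, Polynomial.IsRoot, key] at hy
    have hev := congrArg (aeval ![(1 : ℚ), 0] : MvPolynomial (Fin 2) ℚ →ₐ[ℚ] ℚ) hy
    simp only [Polynomial.eval_add, Polynomial.eval_mul, Polynomial.eval_pow, Polynomial.eval_X,
      Polynomial.eval_C, map_add, map_sub, map_mul, map_pow, aeval_X, map_ofNat, map_zero,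
      Matrix.cons_val_zero, Matrix.cons_val_one, Matrix.head_cons] at hev
    apply no_rat_root_aux (aeval ![(1 : ℚ), 0] y)
    norm_num at hev
    rw [MvPolynomial.aeval_eq_eval]
    linear_combination hev
  exact (MulEquiv.irreducible_iff
    (((renameEquiv ℚ (Equiv.swap (0 : Fin 3) 2)).trans (finSuccEquiv ℚ 2)).toMulEquiv)).mp hirr

end
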